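/- Let T be a triangle and u ∈ H²(T). Let Π^(β)u be the unique polynomial of degree ≤ 2 that agrees with u at the three vertices of T and whose normal-derivative integral over each edge agrees with that of u. Then |Π^(β)u|²_{H²(T)} + |u - Π^(β)u|²_{H²(T)} = |u|²_{H²(T)}, where |v|²_{H²} = ‖v_{xx}‖²_{L²} + 2‖v_{xy}‖²_{L²} + ‖v_{yy}‖²_{L²}. -/

import Mathlib

open MeasureTheory intervalIntegral
noncomputable def pd1 (u : ℝ × ℝ → ℝ) (p : ℝ × ℝ) : ℝ := fderiv ℝ u p (1, 0)
noncomputable def pd2 (u : ℝ × ℝ → ℝ) (p : ℝ × ℝ) : ℝ := fderiv ℝ u p (0, 1)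
lemma lcomb (f : ℝ×ℝ →L[ℝ] ℝ) (v : ℝ×ℝ) : f v = v.1 * f (1,0) + v.2 * f (0,1) := by
  have h : v = v.1 • ((1:ℝ),(0:ℝ)) + v.2 • ((0:ℝ),(1:ℝ)) := by ext <;> simp
  conv_lhs => rw [h]
  rw [map_add, _root_.map_smul, _root_.map_smul]; simp [smul_eq_mul]

lemma contDiff_pd1 {f : ℝ×ℝ → ℝ} (hf : ContDiff ℝ 2 f) : ContDiff ℝ 1 (pd1 f) :=
  ((ContinuousLinearMap.apply ℝ ℝ ((1:ℝ),(0:ℝ))).contDiff).comp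
    (hf.fderiv_right (by norm_num))

lemma contDiff_pd2 {f : ℝ×ℝ → ℝ} (hf : ContDiff ℝ 2 f) : ContDiff ℝ 1 (pd2 f) :=
  ((ContinuousLinearMap.apply ℝ ℝ ((0:ℝ),(1:ℝ))).contDiff).comp
    (hf.fderiv_right (by norm_num))

lemma affine_hasFDerivAt (b c k : ℝ) (q : ℝ×ℝ) :
    HasFDerivAt (fun q : ℝ×ℝ => b*q.1 + c*q.2 + k)
      (b • ContinuousLinearMap.fst ℝ ℝ ℝ + c • ContinuousLinearMap.snd ℝ ℝ ℝ) q := by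
  have hx : HasFDerivAt (fun q : ℝ×ℝ => q.1) (ContinuousLinearMap.fst ℝ ℝ ℝ) q := hasFDerivAt_fst
  have hy : HasFDerivAt (fun q : ℝ×ℝ => q.2) (ContinuousLinearMap.snd ℝ ℝ ℝ) q := hasFDerivAt_snd
  have := ((hx.const_mul b).add (hy.const_mul c)).add_const k
  exact this

lemma quad_hasFDerivAt (a₁ a₂ a₃ a₄ a₅ a₆ : ℝ) (q : ℝ×ℝ) :
    HasFDerivAt (fun q : ℝ×ℝ => a₁*(q.1*q.1) + a₂*(q.1*q.2) + a₃*(q.2*q.2) + a₄*q.1 + a₅*q.2 + a₆)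
      ((2*a₁*q.1 + a₂*q.2 + a₄) • ContinuousLinearMap.fst ℝ ℝ ℝ
        + (a₂*q.1 + 2*a₃*q.2 + a₅) • ContinuousLinearMap.snd ℝ ℝ ℝ) q := by
  have hx : HasFDerivAt (fun q : ℝ×ℝ => q.1) (ContinuousLinearMap.fst ℝ ℝ ℝ) q := hasFDerivAt_fst
  have hy : HasFDerivAt (fun q : ℝ×ℝ => q.2) (ContinuousLinearMap.snd ℝ ℝ ℝ) q := hasFDerivAt_snd
  have h := (((((hx.mul hx).const_mul a₁).add ((hx.mul hy).const_mul a₂)).add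
      ((hy.mul hy).const_mul a₃)).add (hx.const_mul a₄)).add (hy.const_mul a₅)
  have h2 := h.add_const a₆
  refine h2.congr_fderiv ?_
  apply ContinuousLinearMap.ext; intro v
  simp [smul_eq_mul]
  ring

lemma pd1_affine (b c k : ℝ) : pd1 (fun q : ℝ×ℝ => b*q.1 + c*q.2 + k) = fun _ => b := by
  funext q; unfold pd1; rw [(affine_hasFDerivAt b c k q).fderiv]; simp

lemma pd2_affine (b c k : ℝ) : pd2 (fun q : ℝ×ℝ => b*q.1 + c*q.2 + k) = fun _ => c := by
  funext q; unfold pd2; rw [(affine_hasFDerivAt b c k q).fderiv]; simp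

lemma pd1_quad (a₁ a₂ a₃ a₄ a₅ a₆ : ℝ) :
    pd1 (fun q : ℝ×ℝ => a₁*(q.1*q.1) + a₂*(q.1*q.2) + a₃*(q.2*q.2) + a₄*q.1 + a₅*q.2 + a₆)
      = fun q => 2*a₁*q.1 + a₂*q.2 + a₄ := by
  funext q; unfold pd1; rw [(quad_hasFDerivAt a₁ a₂ a₃ a₄ a₅ a₆ q).fderiv]; simp

lemma pd2_quad (a₁ a₂ a₃ a₄ a₅ a₆ : ℝ) :
    pd2 (fun q : ℝ×ℝ => a₁*(q.1*q.1) + a₂*(q.1*q.2) + a₃*(q.2*q.2) + a₄*q.1 + a₅*q.2 + a₆)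
      = fun q => a₂*q.1 + 2*a₃*q.2 + a₅ := by
  funext q; unfold pd2; rw [(quad_hasFDerivAt a₁ a₂ a₃ a₄ a₅ a₆ q).fderiv]; simp

lemma quad_contDiff (a₁ a₂ a₃ a₄ a₅ a₆ : ℝ) {n : ℕ∞} :
    ContDiff ℝ n (fun q : ℝ×ℝ => a₁*(q.1*q.1) + a₂*(q.1*q.2) + a₃*(q.2*q.2) + a₄*q.1 + a₅*q.2 + a₆) := by
  fun_prop

lemma indep_coeffs {p₁ p₂ p₃ : ℝ × ℝ} (hind : AffineIndependent ℝ ![p₁, p₂, p₃])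
    (c₁ c₂ : ℝ) (h : c₁ • (p₂ - p₁) + c₂ • (p₃ - p₁) = 0) : c₁ = 0 ∧ c₂ = 0 := by
  have := affineIndependent_iff.1 hind Finset.univ ![-(c₁+c₂), c₁, c₂]
    (by simp [Fin.sum_univ_three])
    (by
      simp [Fin.sum_univ_three]
      have h2 : (-c₂ + -c₁) • p₁ + c₁ • p₂ + c₂ • p₃ = c₁ • (p₂ - p₁) + c₂ • (p₃ - p₁) := by
        module
      rw [h2, h])
  exact ⟨this 1 (by simp), this 2 (by simp)⟩

lemma pair_basis {d n : ℝ×ℝ} (hd : d ≠ 0) (hnu : n.1^2+n.2^2 = 1)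
    (hno : n.1*d.1 + n.2*d.2 = 0) (e : ℝ×ℝ) : ∃ α β : ℝ, e = α • d + β • n := by
  have hd' : d.1 ≠ 0 ∨ d.2 ≠ 0 := by
    by_contra hcon
    push_neg at hcon
    exact hd (Prod.ext hcon.1 hcon.2)
  have hd2 : 0 < d.1^2 + d.2^2 := by
    rcases hd' with h | h
    · nlinarith [sq_nonneg d.2, sq_pos_of_ne_zero h]
    · nlinarith [sq_nonneg d.1, sq_pos_of_ne_zero h]
  have hdet : d.1*n.2 - d.2*n.1 ≠ 0 := by
    intro h0
    nlinarith [sq_nonneg (d.1*n.2 - d.2*n.1), sq_nonneg (n.1*d.1 + n.2*d.2)]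
  refine ⟨(e.1*n.2 - e.2*n.1)/(d.1*n.2 - d.2*n.1), (d.1*e.2 - d.2*e.1)/(d.1*n.2 - d.2*n.1), ?_⟩
  have h1 : (e.1*n.2 - e.2*n.1)/(d.1*n.2 - d.2*n.1) * d.1
      + (d.1*e.2 - d.2*e.1)/(d.1*n.2 - d.2*n.1) * n.1 = e.1 := by
    rw [div_mul_eq_mul_div, div_mul_eq_mul_div, ← add_div, div_eq_iff hdet]; ring
  have h2 : (e.1*n.2 - e.2*n.1)/(d.1*n.2 - d.2*n.1) * d.2
      + (d.1*e.2 - d.2*e.1)/(d.1*n.2 - d.2*n.1) * n.2 = e.2 := by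
    rw [div_mul_eq_mul_div, div_mul_eq_mul_div, ← add_div, div_eq_iff hdet]; ring
  ext
  · simpa using h1.symm
  · simpa using h2.symm

lemma edge_dir_integral_cont {w : ℝ×ℝ → ℝ} (hw : ContDiff ℝ 2 w) (q d v : ℝ×ℝ) :
    Continuous fun t : ℝ => fderiv ℝ w (q + t • d) v := by
  have h1 : Continuous (fderiv ℝ w) := hw.continuous_fderiv (by norm_num)
  have h2 : Continuous fun t : ℝ => q + t • d := by fun_prop
  exact (h1.comp h2).clm_apply continuous_const

lemma edge_integral_zero {w : ℝ×ℝ → ℝ} (hw : ContDiff ℝ 2 w) {q r n : ℝ×ℝ}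
    (hq : w q = 0) (hr : w r = 0)
    (hnu : n.1^2 + n.2^2 = 1) (hno : n.1*(r-q).1 + n.2*(r-q).2 = 0)
    (hne : (∫ t in (0:ℝ)..1, fderiv ℝ w (q + t • (r-q)) n) = 0)
    (hqr : q ≠ r) (e : ℝ×ℝ) :
    (∫ t in (0:ℝ)..1, fderiv ℝ w (q + t • (r-q)) e) = 0 := by
  set d := r - q with hd_def
  have hd : d ≠ 0 := sub_ne_zero.2 (Ne.symm hqr)
  -- tangential integral
  have htan : (∫ t in (0:ℝ)..1, fderiv ℝ w (q + t • d) d) = 0 := by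
    have hFTC : ∀ t ∈ Set.uIcc (0:ℝ) 1,
        HasDerivAt (fun s : ℝ => w (q + s • d)) (fderiv ℝ w (q + t • d) d) t := by
      intro t _
      have hγ : HasDerivAt (fun s : ℝ => q + s • d) d t := by
        simpa using ((hasDerivAt_id t).smul_const d).const_add q
      exact ((hw.differentiable (by norm_num) (q + t • d)).hasFDerivAt).comp_hasDerivAt t hγ
    rw [intervalIntegral.integral_eq_sub_of_hasDerivAt hFTC
      ((edge_dir_integral_cont hw q d d).intervalIntegrable 0 1)]
    simp [hd_def, hq, hr]
  obtain ⟨α, β, hαβ⟩ := pair_basis hd hnu (by simpa using hno) e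
  have hsplit : ∀ t : ℝ, fderiv ℝ w (q + t • d) e
      = α * fderiv ℝ w (q + t • d) d + β * fderiv ℝ w (q + t • d) n := by
    intro t
    rw [hαβ, map_add, _root_.map_smul, _root_.map_smul]; simp
  rw [intervalIntegral.integral_congr (g := fun t =>
      α * fderiv ℝ w (q + t • d) d + β * fderiv ℝ w (q + t • d) n) (fun t _ => hsplit t)]
  rw [intervalIntegral.integral_add (f := fun t => α * fderiv ℝ w (q + t • d) d)
      (g := fun t => β * fderiv ℝ w (q + t • d) n)
      ((continuous_const.mul (edge_dir_integral_cont hw q d d)).intervalIntegrable 0 1)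
      ((continuous_const.mul (edge_dir_integral_cont hw q d n)).intervalIntegrable 0 1),
    intervalIntegral.integral_const_mul, intervalIntegral.integral_const_mul, htan, hne]
  ring

noncomputable def stdSimplex2 : Set (ℝ×ℝ) := convexHull ℝ {((0:ℝ),(0:ℝ)), (1,0), (0,1)}

lemma stdSimplex2_eq :
    stdSimplex2 = {p : ℝ×ℝ | 0 ≤ p.1 ∧ 0 ≤ p.2 ∧ p.1 + p.2 ≤ 1} := by
  apply le_antisymm
  · apply convexHull_min
    · intro p hp
      simp only [Set.mem_insert_iff, Set.mem_singleton_iff] at hp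
      rcases hp with h | h | h <;> simp [h] <;> norm_num
    · intro x hx y hy a b ha hb hab
      simp only [Set.mem_setOf_eq] at *
      refine ⟨?_, ?_, ?_⟩
      · have : (a • x + b • y).1 = a * x.1 + b * y.1 := by simp
        rw [this]; nlinarith [hx.1, hy.1]
      · have : (a • x + b • y).2 = a * x.2 + b * y.2 := by simp
        rw [this]; nlinarith [hx.2.1, hy.2.1]
      · have h1 : (a • x + b • y).1 = a * x.1 + b * y.1 := by simp
        have h2 : (a • x + b • y).2 = a * x.2 + b * y.2 := by simp
        rw [h1, h2]; nlinarith [hx.2.2, hy.2.2]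
  · intro p hp
    simp only [Set.mem_setOf_eq] at hp
    have hsum : p = (1 - p.1 - p.2) • ((0:ℝ),(0:ℝ)) + p.1 • ((1:ℝ),(0:ℝ)) + p.2 • ((0:ℝ),(1:ℝ)) := by
      ext <;> simp
    rw [hsum]
    have hc := convex_convexHull ℝ ({((0:ℝ),(0:ℝ)), (1,0), (0,1)} : Set (ℝ×ℝ))
    have h0 : ((0:ℝ),(0:ℝ)) ∈ stdSimplex2 := subset_convexHull ℝ _ (by simp)
    have h1 : ((1:ℝ),(0:ℝ)) ∈ stdSimplex2 := subset_convexHull ℝ _ (by simp)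
    have h2 : ((0:ℝ),(1:ℝ)) ∈ stdSimplex2 := subset_convexHull ℝ _ (by simp)
    have key := hc.sum_mem (t := (Finset.univ : Finset (Fin 3)))
      (w := ![1 - p.1 - p.2, p.1, p.2]) (z := ![((0:ℝ),(0:ℝ)), (1,0), (0,1)])
      (fun i _ => by fin_cases i <;> simp <;> nlinarith [hp.1, hp.2.1, hp.2.2])
      (by simp [Fin.sum_univ_three]; ring)
      (fun i _ => by fin_cases i <;> first | exact h0 | exact h1 | exact h2)
    simpa [Fin.sum_univ_three, stdSimplex2] using key

lemma stdSimplex2_compact : IsCompact stdSimplex2 := by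
  have : Set.Finite {((0:ℝ),(0:ℝ)), (1,0), (0,1)} := by
    apply Set.Finite.insert; apply Set.Finite.insert; exact Set.finite_singleton _
  exact this.isCompact_convexHull ℝ

lemma stdSimplex2_meas : MeasurableSet stdSimplex2 :=
  stdSimplex2_compact.isClosed.measurableSet

lemma hasDerivAt_vert {g : ℝ×ℝ → ℝ} (hg : ContDiff ℝ 1 g) (x y : ℝ) :
    HasDerivAt (fun s => g (x, s)) (pd2 g (x, y)) y := by
  have hc : HasDerivAt (fun s : ℝ => ((x : ℝ), s)) ((0:ℝ), (1:ℝ)) y :=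
    (hasDerivAt_const y x).prodMk (hasDerivAt_id y)
  exact ((hg.differentiable one_ne_zero (x, y)).hasFDerivAt).comp_hasDerivAt y hc

lemma hasDerivAt_horiz {g : ℝ×ℝ → ℝ} (hg : ContDiff ℝ 1 g) (x y : ℝ) :
    HasDerivAt (fun s => g (s, y)) (pd1 g (x, y)) x := by
  have hc : HasDerivAt (fun s : ℝ => (s, (y:ℝ))) ((1:ℝ), (0:ℝ)) x :=
    (hasDerivAt_id x).prodMk (hasDerivAt_const x y)
  exact ((hg.differentiable one_ne_zero (x, y)).hasFDerivAt).comp_hasDerivAt x hc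

lemma cont_pd1 {g : ℝ×ℝ → ℝ} (hg : ContDiff ℝ 1 g) : Continuous (pd1 g) :=
  (hg.continuous_fderiv one_ne_zero).clm_apply continuous_const

lemma cont_pd2 {g : ℝ×ℝ → ℝ} (hg : ContDiff ℝ 1 g) : Continuous (pd2 g) :=
  (hg.continuous_fderiv one_ne_zero).clm_apply continuous_const

lemma simplex_pd2 {g : ℝ×ℝ → ℝ} (hg : ContDiff ℝ 1 g) :
    (∫ p in stdSimplex2, pd2 g p)
      = (∫ t in (0:ℝ)..1, g (t, 1-t)) - ∫ t in (0:ℝ)..1, g (t, 0) := by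
  have hf : Continuous (pd2 g) := cont_pd2 hg
  have hint : IntegrableOn (pd2 g) stdSimplex2 :=
    hf.continuousOn.integrableOn_compact stdSimplex2_compact
  have hind : Integrable (stdSimplex2.indicator (pd2 g)) :=
    (integrable_indicator_iff stdSimplex2_meas).2 hint
  rw [← MeasureTheory.integral_indicator stdSimplex2_meas]
  rw [show (volume : Measure (ℝ×ℝ)) = (volume : Measure ℝ).prod volume from Measure.volume_eq_prod ℝ ℝ]
  rw [MeasureTheory.integral_prod _ ((Measure.volume_eq_prod ℝ ℝ) ▸ hind)]
  have hinner : ∀ x : ℝ, (∫ y : ℝ, stdSimplex2.indicator (pd2 g) (x, y))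
      = (Set.Icc (0:ℝ) 1).indicator (fun x => g (x, 1-x) - g (x, 0)) x := by
    intro x
    by_cases hx : x ∈ Set.Icc (0:ℝ) 1
    · have hx0 : 0 ≤ x := hx.1
      have hx1 : x ≤ 1 := hx.2
      have heq : ∀ y : ℝ, stdSimplex2.indicator (pd2 g) (x, y)
          = (Set.Icc (0:ℝ) (1-x)).indicator (fun y => pd2 g (x, y)) y := by
        intro y
        by_cases hy : (x, y) ∈ stdSimplex2
        · rw [stdSimplex2_eq] at hy
          simp only [Set.mem_setOf_eq] at hy
          rw [Set.indicator_of_mem (by rw [stdSimplex2_eq]; exact hy),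
            Set.indicator_of_mem (by constructor <;> [exact hy.2.1; linarith [hy.2.2]])]
        · rw [Set.indicator_of_notMem hy, Set.indicator_of_notMem]
          intro hy2
          apply hy
          rw [stdSimplex2_eq]
          exact ⟨hx0, hy2.1, by linarith [hy2.2]⟩
      rw [Set.indicator_of_mem hx]
      simp_rw [heq]
      rw [MeasureTheory.integral_indicator measurableSet_Icc,
        MeasureTheory.integral_Icc_eq_integral_Ioc,
        ← intervalIntegral.integral_of_le (by linarith : (0:ℝ) ≤ 1 - x)]
      have hcont : Continuous fun y => pd2 g (x, y) :=
        hf.comp (continuous_const.prodMk continuous_id)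
      rw [intervalIntegral.integral_eq_sub_of_hasDerivAt
        (fun y _ => hasDerivAt_vert hg x y) (hcont.intervalIntegrable 0 (1-x))]
    · have heq : ∀ y : ℝ, stdSimplex2.indicator (pd2 g) (x, y) = 0 := by
        intro y
        apply Set.indicator_of_notMem
        rw [stdSimplex2_eq]
        intro hy
        simp only [Set.mem_setOf_eq] at hy
        simp only [Set.mem_Icc, not_and_or, not_le] at hx
        rcases hx with h | h
        · linarith [hy.1]
        · linarith [hy.2.1, hy.2.2]
      rw [Set.indicator_of_notMem hx]
      simp_rw [heq]
      simp
  simp_rw [hinner]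
  rw [MeasureTheory.integral_indicator measurableSet_Icc,
    MeasureTheory.integral_Icc_eq_integral_Ioc,
    ← intervalIntegral.integral_of_le (by norm_num : (0:ℝ) ≤ 1)]
  have hc1 : Continuous fun t : ℝ => g (t, 1-t) :=
    hg.continuous.comp (continuous_id.prodMk (continuous_const.sub continuous_id))
  have hc2 : Continuous fun t : ℝ => g (t, 0) :=
    hg.continuous.comp (continuous_id.prodMk continuous_const)
  exact intervalIntegral.integral_sub (hc1.intervalIntegrable 0 1) (hc2.intervalIntegrable 0 1)

lemma simplex_pd1 {g : ℝ×ℝ → ℝ} (hg : ContDiff ℝ 1 g) :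
    (∫ p in stdSimplex2, pd1 g p)
      = (∫ t in (0:ℝ)..1, g (1-t, t)) - ∫ t in (0:ℝ)..1, g (0, t) := by
  have hf : Continuous (pd1 g) := cont_pd1 hg
  have hint : IntegrableOn (pd1 g) stdSimplex2 :=
    hf.continuousOn.integrableOn_compact stdSimplex2_compact
  have hind : Integrable (stdSimplex2.indicator (pd1 g)) :=
    (integrable_indicator_iff stdSimplex2_meas).2 hint
  rw [← MeasureTheory.integral_indicator stdSimplex2_meas]
  rw [show (volume : Measure (ℝ×ℝ)) = (volume : Measure ℝ).prod volume from Measure.volume_eq_prod ℝ ℝ]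
  rw [MeasureTheory.integral_prod_symm _ ((Measure.volume_eq_prod ℝ ℝ) ▸ hind)]
  have hinner : ∀ y : ℝ, (∫ x : ℝ, stdSimplex2.indicator (pd1 g) (x, y))
      = (Set.Icc (0:ℝ) 1).indicator (fun y => g (1-y, y) - g (0, y)) y := by
    intro y
    by_cases hy : y ∈ Set.Icc (0:ℝ) 1
    · have hy0 : 0 ≤ y := hy.1
      have hy1 : y ≤ 1 := hy.2
      have heq : ∀ x : ℝ, stdSimplex2.indicator (pd1 g) (x, y)
          = (Set.Icc (0:ℝ) (1-y)).indicator (fun x => pd1 g (x, y)) x := by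
        intro x
        by_cases hx : (x, y) ∈ stdSimplex2
        · rw [stdSimplex2_eq] at hx
          simp only [Set.mem_setOf_eq] at hx
          rw [Set.indicator_of_mem (by rw [stdSimplex2_eq]; exact hx),
            Set.indicator_of_mem (by constructor <;> [exact hx.1; linarith [hx.2.2]])]
        · rw [Set.indicator_of_notMem hx, Set.indicator_of_notMem]
          intro hx2
          apply hx
          rw [stdSimplex2_eq]
          exact ⟨hx2.1, hy0, by linarith [hx2.2]⟩
      rw [Set.indicator_of_mem hy]
      simp_rw [heq]
      rw [MeasureTheory.integral_indicator measurableSet_Icc,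
        MeasureTheory.integral_Icc_eq_integral_Ioc,
        ← intervalIntegral.integral_of_le (by linarith : (0:ℝ) ≤ 1 - y)]
      have hcont : Continuous fun x => pd1 g (x, y) :=
        hf.comp (continuous_id.prodMk continuous_const)
      rw [intervalIntegral.integral_eq_sub_of_hasDerivAt
        (fun x _ => hasDerivAt_horiz hg x y) (hcont.intervalIntegrable 0 (1-y))]
    · have heq : ∀ x : ℝ, stdSimplex2.indicator (pd1 g) (x, y) = 0 := by
        intro x
        apply Set.indicator_of_notMem
        rw [stdSimplex2_eq]
        intro hx
        simp only [Set.mem_setOf_eq] at hx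
        simp only [Set.mem_Icc, not_and_or, not_le] at hy
        rcases hy with h | h
        · linarith [hx.2.1]
        · linarith [hx.1, hx.2.2]
      rw [Set.indicator_of_notMem hy]
      simp_rw [heq]
      simp
  simp_rw [hinner]
  rw [MeasureTheory.integral_indicator measurableSet_Icc,
    MeasureTheory.integral_Icc_eq_integral_Ioc,
    ← intervalIntegral.integral_of_le (by norm_num : (0:ℝ) ≤ 1)]
  have hc1 : Continuous fun t : ℝ => g (1-t, t) :=
    hg.continuous.comp ((continuous_const.sub continuous_id).prodMk continuous_id)
  have hc2 : Continuous fun t : ℝ => g (0, t) :=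
    hg.continuous.comp (continuous_const.prodMk continuous_id)
  exact intervalIntegral.integral_sub (hc1.intervalIntegrable 0 1) (hc2.intervalIntegrable 0 1)

lemma reverse_param (f : ℝ×ℝ → ℝ) (q r : ℝ×ℝ) :
    (∫ t in (0:ℝ)..1, f (r + t • (q - r))) = ∫ t in (0:ℝ)..1, f (q + t • (r - q)) := by
  have h := intervalIntegral.integral_comp_sub_left (a := (0:ℝ)) (b := 1)
    (fun t => f (q + t • (r - q))) 1
  simp only [sub_self, sub_zero] at h
  rw [← h]
  apply intervalIntegral.integral_congr
  intro t _
  simp only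
  congr 1
  module

lemma indep_det {p₁ p₂ p₃ : ℝ×ℝ} (hind : AffineIndependent ℝ ![p₁, p₂, p₃]) :
    (p₂-p₁).1*(p₃-p₁).2 - (p₂-p₁).2*(p₃-p₁).1 ≠ 0 := by
  intro h0
  simp only [Prod.fst_sub, Prod.snd_sub] at h0
  have h1 := indep_coeffs hind ((p₃-p₁).2) (-(p₂-p₁).2)
    (by ext <;> simp <;> nlinarith [h0])
  have h2 := indep_coeffs hind (-(p₃-p₁).1) ((p₂-p₁).1)
    (by ext <;> simp <;> nlinarith [h0])
  simp only [Prod.fst_sub, Prod.snd_sub, neg_eq_zero] at h1 h2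
  have h3 := indep_coeffs hind 1 0 (by
    ext <;> simp <;> nlinarith [h1.1, h1.2, h2.1, h2.2])
  simpa using h3.1

noncomputable def H2semisq (u : ℝ × ℝ → ℝ) (T : Set (ℝ × ℝ)) : ℝ :=
  ∫ q in T, ((pd1 (pd1 u) q)^2 + 2*(pd1 (pd2 u) q)^2 + (pd2 (pd2 u) q)^2)

/-- The Morley interpolation `Π^(β)u` (the quadratic polynomial matching `u` at the
vertices and whose normal-derivative integral on each edge matches that of `u`)
is an orthogonal projection in the `H²` seminorm. -/
theorem interp_beta_pythagoras (p₁ p₂ p₃ : ℝ × ℝ)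
    (hind : AffineIndependent ℝ ![p₁, p₂, p₃])
    (u : ℝ × ℝ → ℝ) (hu : ContDiff ℝ 2 u)
    (a₁ a₂ a₃ a₄ a₅ a₆ : ℝ) (P : ℝ × ℝ → ℝ)
    (hP : P = fun q => a₁ * q.1^2 + a₂ * q.1 * q.2 + a₃ * q.2^2
        + a₄ * q.1 + a₅ * q.2 + a₆)
    (hv₁ : P p₁ = u p₁) (hv₂ : P p₂ = u p₂) (hv₃ : P p₃ = u p₃)
    (n₁ n₂ n₃ : ℝ × ℝ)
    (hn₁ : n₁.1^2 + n₁.2^2 = 1 ∧ n₁.1 * (p₃ - p₂).1 + n₁.2 * (p₃ - p₂).2 = 0)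
    (hn₂ : n₂.1^2 + n₂.2^2 = 1 ∧ n₂.1 * (p₁ - p₃).1 + n₂.2 * (p₁ - p₃).2 = 0)
    (hn₃ : n₃.1^2 + n₃.2^2 = 1 ∧ n₃.1 * (p₂ - p₁).1 + n₃.2 * (p₂ - p₁).2 = 0)
    (he₁ : (∫ t in (0:ℝ)..1, fderiv ℝ P (p₂ + t • (p₃ - p₂)) n₁)
        = ∫ t in (0:ℝ)..1, fderiv ℝ u (p₂ + t • (p₃ - p₂)) n₁)
    (he₂ : (∫ t in (0:ℝ)..1, fderiv ℝ P (p₃ + t • (p₁ - p₃)) n₂)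
        = ∫ t in (0:ℝ)..1, fderiv ℝ u (p₃ + t • (p₁ - p₃)) n₂)
    (he₃ : (∫ t in (0:ℝ)..1, fderiv ℝ P (p₁ + t • (p₂ - p₁)) n₃)
        = ∫ t in (0:ℝ)..1, fderiv ℝ u (p₁ + t • (p₂ - p₁)) n₃) :
    H2semisq P (convexHull ℝ {p₁, p₂, p₃})
      + H2semisq (fun z => u z - P z) (convexHull ℝ {p₁, p₂, p₃})
      = H2semisq u (convexHull ℝ {p₁, p₂, p₃}) := by
  -- basic setup
  have hP2 : P = fun q : ℝ×ℝ =>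
      a₁*(q.1*q.1) + a₂*(q.1*q.2) + a₃*(q.2*q.2) + a₄*q.1 + a₅*q.2 + a₆ := by
    rw [hP]; funext q; ring
  have hPc : ContDiff ℝ 2 P := by rw [hP2]; exact quad_contDiff a₁ a₂ a₃ a₄ a₅ a₆
  set w : ℝ×ℝ → ℝ := fun z => u z - P z with hw_def
  have hw : ContDiff ℝ 2 w := hu.sub hPc
  -- derivatives of P
  have hPd1 : pd1 P = fun q => 2*a₁*q.1 + a₂*q.2 + a₄ := by
    rw [hP2]; exact pd1_quad a₁ a₂ a₃ a₄ a₅ a₆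
  have hPd2 : pd2 P = fun q => a₂*q.1 + 2*a₃*q.2 + a₅ := by
    rw [hP2]; exact pd2_quad a₁ a₂ a₃ a₄ a₅ a₆
  have hP11 : pd1 (pd1 P) = fun _ => 2*a₁ := by rw [hPd1]; exact pd1_affine (2*a₁) a₂ a₄
  have hP12 : pd1 (pd2 P) = fun _ => a₂ := by rw [hPd2]; exact pd1_affine a₂ (2*a₃) a₅
  have hP22 : pd2 (pd2 P) = fun _ => 2*a₃ := by rw [hPd2]; exact pd2_affine a₂ (2*a₃) a₅
  -- vertex values of w
  have hw₁ : w p₁ = 0 := by simp [hw_def, hv₁]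
  have hw₂ : w p₂ = 0 := by simp [hw_def, hv₂]
  have hw₃ : w p₃ = 0 := by simp [hw_def, hv₃]
  -- vertex distinctness
  have hp12 : p₁ ≠ p₂ := by
    intro h
    have := (indep_coeffs hind 1 0 (by simp [← h])).1
    norm_num at this
  have hp23 : p₂ ≠ p₃ := by
    intro h
    have := (indep_coeffs hind (-1) 1 (by rw [h]; module)).1
    norm_num at this
  have hp31 : p₃ ≠ p₁ := by
    intro h
    have := (indep_coeffs hind 0 1 (by simp [h])).2
    norm_num at this
  -- normal integrals of w vanish
  have hne : ∀ (q r nn : ℝ×ℝ),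
      ((∫ t in (0:ℝ)..1, fderiv ℝ P (q + t • (r-q)) nn)
        = ∫ t in (0:ℝ)..1, fderiv ℝ u (q + t • (r-q)) nn) →
      (∫ t in (0:ℝ)..1, fderiv ℝ w (q + t • (r-q)) nn) = 0 := by
    intro q r nn h
    have hpt : ∀ t : ℝ, fderiv ℝ w (q + t • (r-q)) nn
        = fderiv ℝ u (q + t • (r-q)) nn - fderiv ℝ P (q + t • (r-q)) nn := by
      intro t
      rw [hw_def, fderiv_fun_sub (hu.differentiable (by norm_num) _)
        (hPc.differentiable (by norm_num) _)]
      simp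
    rw [intervalIntegral.integral_congr (g := fun t =>
        fderiv ℝ u (q + t • (r-q)) nn - fderiv ℝ P (q + t • (r-q)) nn) (fun t _ => hpt t)]
    rw [intervalIntegral.integral_sub
      ((edge_dir_integral_cont hu q (r-q) nn).intervalIntegrable 0 1)
      ((edge_dir_integral_cont hPc q (r-q) nn).intervalIntegrable 0 1), h]
    ring
  -- edge integrals of all directional derivatives of w vanish
  have E₁ : ∀ e : ℝ×ℝ, (∫ t in (0:ℝ)..1, fderiv ℝ w (p₂ + t • (p₃-p₂)) e) = 0 :=
    fun e => edge_integral_zero hw hw₂ hw₃ hn₁.1 hn₁.2 (hne _ _ _ he₁) hp23 e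
  have E₂ : ∀ e : ℝ×ℝ, (∫ t in (0:ℝ)..1, fderiv ℝ w (p₃ + t • (p₁-p₃)) e) = 0 :=
    fun e => edge_integral_zero hw hw₃ hw₁ hn₂.1 hn₂.2 (hne _ _ _ he₂) hp31 e
  have E₃ : ∀ e : ℝ×ℝ, (∫ t in (0:ℝ)..1, fderiv ℝ w (p₁ + t • (p₂-p₁)) e) = 0 :=
    fun e => edge_integral_zero hw hw₁ hw₂ hn₃.1 hn₃.2 (hne _ _ _ he₃) hp12 e
  -- the affine parametrization of the triangle
  set dd : ℝ×ℝ := p₂ - p₁ with hdd_def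
  set ee : ℝ×ℝ := p₃ - p₁ with hee_def
  set M : ℝ×ℝ →L[ℝ] ℝ×ℝ := (ContinuousLinearMap.fst ℝ ℝ ℝ).smulRight dd
      + (ContinuousLinearMap.snd ℝ ℝ ℝ).smulRight ee with hM_def
  have hM : ∀ v : ℝ×ℝ, M v = v.1 • dd + v.2 • ee := fun v => by
    simp [hM_def]
  set A : ℝ×ℝ → ℝ×ℝ := fun t => p₁ + M t with hA_def
  have hAder : ∀ t, HasFDerivAt A M t := fun t => (M.hasFDerivAt (x := t)).const_add p₁
  have hAc : Continuous A := continuous_const.add M.continuous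
  have hAcd : ContDiff ℝ 1 A := contDiff_const.add (M.contDiff)
  have hAdiff : Differentiable ℝ A := fun t => (hAder t).differentiableAt
  have hA00 : A (0,0) = p₁ := by simp [hA_def, hM]
  have hA10 : A (1,0) = p₂ := by
    have := hM (1,0); simp at this
    simp [hA_def, this, hdd_def]
  have hA01 : A (0,1) = p₃ := by
    have := hM (0,1); simp at this
    simp [hA_def, this, hee_def]
  have hinj : Set.InjOn A stdSimplex2 := by
    intro s _ t _ h
    have hMst : M (s - t) = 0 := by
      have : M s = M t := by
        have h2 : p₁ + M s = p₁ + M t := h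
        exact add_left_cancel h2
      rw [map_sub, this, sub_self]
    rw [hM] at hMst
    have hco := indep_coeffs hind (s-t).1 (s-t).2 hMst
    have h1 : s.1 = t.1 := by have := hco.1; simp at this; linarith [this]
    have h2 : s.2 = t.2 := by have := hco.2; simp at this; linarith [this]
    exact Prod.ext h1 h2
  -- T as image of the standard simplex
  have hT : convexHull ℝ {p₁, p₂, p₃} = A '' stdSimplex2 := by
    have hAffEq : ∃ Aff : (ℝ×ℝ) →ᵃ[ℝ] (ℝ×ℝ), ⇑Aff = A := by
      refine ⟨AffineMap.mk' A M.toLinearMap 0 (fun p' => ?_), rfl⟩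
      simp [hA_def]
      abel
    obtain ⟨Aff, hAffEq⟩ := hAffEq
    rw [stdSimplex2, ← hAffEq, AffineMap.image_convexHull]
    congr 1
    rw [hAffEq]
    rw [Set.image_insert_eq, Set.image_insert_eq, Set.image_singleton, hA00, hA10, hA01]
  -- change of variables
  have cov : ∀ ϕ : ℝ×ℝ → ℝ, (∫ x in stdSimplex2, ϕ (A x)) = 0 →
      (∫ x in convexHull ℝ {p₁, p₂, p₃}, ϕ x) = 0 := by
    intro ϕ h
    rw [hT, MeasureTheory.integral_image_eq_integral_abs_det_fderiv_smul volume
      stdSimplex2_meas (fun x _ => (hAder x).hasFDerivWithinAt) hinj ϕ]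
    simp_rw [smul_eq_mul]
    rw [MeasureTheory.integral_const_mul, h, mul_zero]
  -- the pulled-back gradient components
  set G₁ : ℝ×ℝ → ℝ := fun t => pd1 w (A t) with hG₁_def
  set G₂ : ℝ×ℝ → ℝ := fun t => pd2 w (A t) with hG₂_def
  have hwc1 : ContDiff ℝ 1 (pd1 w) := contDiff_pd1 hw
  have hwc2 : ContDiff ℝ 1 (pd2 w) := contDiff_pd2 hw
  have hG₁c : ContDiff ℝ 1 G₁ := hwc1.comp hAcd
  have hG₂c : ContDiff ℝ 1 G₂ := hwc2.comp hAcd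
  -- edge parametrizations
  have hA1t : ∀ t : ℝ, A (1-t, t) = p₂ + t • (p₃ - p₂) := by
    intro t; rw [hA_def]; simp only [hM]; simp [hdd_def, hee_def]; module
  have hA0t : ∀ t : ℝ, A (0, t) = p₁ + t • (p₃ - p₁) := by
    intro t; rw [hA_def]; simp only [hM]; simp [hdd_def, hee_def]
  have hAt0 : ∀ t : ℝ, A (t, 0) = p₁ + t • (p₂ - p₁) := by
    intro t; rw [hA_def]; simp only [hM]; simp [hdd_def, hee_def]
  have hAt1t : ∀ t : ℝ, A (t, 1-t) = p₃ + t • (p₂ - p₃) := by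
    intro t; rw [hA_def]; simp only [hM]; simp [hdd_def, hee_def]; module
  -- boundary integrals vanish
  have hB1 : ∀ (gg : ℝ×ℝ → ℝ) (v : ℝ×ℝ), (∀ x, gg x = fderiv ℝ w x v) →
      (∫ t in (0:ℝ)..1, gg (A (1-t, t))) = 0 := by
    intro gg v hgg
    rw [intervalIntegral.integral_congr (g := fun t => fderiv ℝ w (p₂ + t • (p₃-p₂)) v)
      (fun t _ => by rw [hgg, hA1t t])]
    exact E₁ v
  have hB2 : ∀ (gg : ℝ×ℝ → ℝ) (v : ℝ×ℝ), (∀ x, gg x = fderiv ℝ w x v) →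
      (∫ t in (0:ℝ)..1, gg (A (0, t))) = 0 := by
    intro gg v hgg
    rw [intervalIntegral.integral_congr (g := fun t => fderiv ℝ w (p₁ + t • (p₃-p₁)) v)
      (fun t _ => by rw [hgg, hA0t t])]
    rw [show (fun t => fderiv ℝ w (p₁ + t • (p₃-p₁)) v)
      = fun t => (fun x => fderiv ℝ w x v) (p₁ + t • (p₃-p₁)) from rfl]
    rw [reverse_param (fun x => fderiv ℝ w x v) p₃ p₁]
    exact E₂ v
  have hB3 : ∀ (gg : ℝ×ℝ → ℝ) (v : ℝ×ℝ), (∀ x, gg x = fderiv ℝ w x v) →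
      (∫ t in (0:ℝ)..1, gg (A (t, 0))) = 0 := by
    intro gg v hgg
    rw [intervalIntegral.integral_congr (g := fun t => fderiv ℝ w (p₁ + t • (p₂-p₁)) v)
      (fun t _ => by rw [hgg, hAt0 t])]
    exact E₃ v
  have hB4 : ∀ (gg : ℝ×ℝ → ℝ) (v : ℝ×ℝ), (∀ x, gg x = fderiv ℝ w x v) →
      (∫ t in (0:ℝ)..1, gg (A (t, 1-t))) = 0 := by
    intro gg v hgg
    rw [intervalIntegral.integral_congr (g := fun t => fderiv ℝ w (p₃ + t • (p₂-p₃)) v)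
      (fun t _ => by rw [hgg, hAt1t t])]
    rw [show (fun t => fderiv ℝ w (p₃ + t • (p₂-p₃)) v)
      = fun t => (fun x => fderiv ℝ w x v) (p₃ + t • (p₂-p₃)) from rfl]
    rw [reverse_param (fun x => fderiv ℝ w x v) p₂ p₃]
    exact E₁ v
  -- simplex integrals of derivatives of G vanish
  have hS11 : (∫ p in stdSimplex2, pd1 G₁ p) = 0 := by
    rw [simplex_pd1 hG₁c]
    simp only [hG₁_def]
    rw [hB1 (pd1 w) (1,0) (fun x => rfl), hB2 (pd1 w) (1,0) (fun x => rfl)]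
    ring
  have hS21 : (∫ p in stdSimplex2, pd2 G₁ p) = 0 := by
    rw [simplex_pd2 hG₁c]
    simp only [hG₁_def]
    rw [hB4 (pd1 w) (1,0) (fun x => rfl), hB3 (pd1 w) (1,0) (fun x => rfl)]
    ring
  have hS12 : (∫ p in stdSimplex2, pd1 G₂ p) = 0 := by
    rw [simplex_pd1 hG₂c]
    simp only [hG₂_def]
    rw [hB1 (pd2 w) (0,1) (fun x => rfl), hB2 (pd2 w) (0,1) (fun x => rfl)]
    ring
  have hS22 : (∫ p in stdSimplex2, pd2 G₂ p) = 0 := by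
    rw [simplex_pd2 hG₂c]
    simp only [hG₂_def]
    rw [hB4 (pd2 w) (0,1) (fun x => rfl), hB3 (pd2 w) (0,1) (fun x => rfl)]
    ring
  -- chain rule for compositions with A
  have chain : ∀ (f : ℝ×ℝ → ℝ), ContDiff ℝ 1 f → ∀ (t v : ℝ×ℝ),
      fderiv ℝ (fun s => f (A s)) t v = fderiv ℝ f (A t) (M v) := by
    intro f hf t v
    have hcomp : HasFDerivAt (fun s => f (A s)) ((fderiv ℝ f (A t)).comp M) t :=
      HasFDerivAt.comp t ((hf.differentiable one_ne_zero (A t)).hasFDerivAt) (hAder t)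
    rw [hcomp.fderiv]
    rfl
  have hM10 : M (1,0) = dd := by rw [hM]; simp
  have hM01 : M (0,1) = ee := by rw [hM]; simp
  have hpdG : ∀ (f : ℝ×ℝ → ℝ), ContDiff ℝ 1 f → ∀ (t v : ℝ×ℝ),
      fderiv ℝ (fun s => f (A s)) t v = (M v).1 * pd1 f (A t) + (M v).2 * pd2 f (A t) := by
    intro f hf t v
    rw [chain f hf t v, lcomb (fderiv ℝ f (A t)) (M v)]
    rfl
  have hpdG11 : pd1 G₁ = fun t => dd.1 * pd1 (pd1 w) (A t) + dd.2 * pd2 (pd1 w) (A t) := by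
    funext t
    have h := hpdG (pd1 w) hwc1 t (1,0)
    rw [hM10] at h
    simp only [pd1, hG₁_def]
    exact h
  have hpdG21 : pd2 G₁ = fun t => ee.1 * pd1 (pd1 w) (A t) + ee.2 * pd2 (pd1 w) (A t) := by
    funext t
    have h := hpdG (pd1 w) hwc1 t (0,1)
    rw [hM01] at h
    simp only [pd1, pd2, hG₁_def]
    exact h
  have hpdG12 : pd1 G₂ = fun t => dd.1 * pd1 (pd2 w) (A t) + dd.2 * pd2 (pd2 w) (A t) := by
    funext t
    have h := hpdG (pd2 w) hwc2 t (1,0)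
    rw [hM10] at h
    simp only [pd1, pd2, hG₂_def]
    exact h
  have hpdG22 : pd2 G₂ = fun t => ee.1 * pd1 (pd2 w) (A t) + ee.2 * pd2 (pd2 w) (A t) := by
    funext t
    have h := hpdG (pd2 w) hwc2 t (0,1)
    rw [hM01] at h
    simp only [pd1, pd2, hG₂_def]
    exact h
  -- continuity of second derivatives of w
  have hC11 : Continuous (pd1 (pd1 w)) := cont_pd1 hwc1
  have hC21 : Continuous (pd2 (pd1 w)) := cont_pd2 hwc1
  have hC12 : Continuous (pd1 (pd2 w)) := cont_pd1 hwc2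
  have hC22 : Continuous (pd2 (pd2 w)) := cont_pd2 hwc2
  have hWcont : ∀ f : ℝ×ℝ → ℝ, Continuous f → IntegrableOn (fun x => f (A x)) stdSimplex2 :=
    fun f hfc => ((hfc.comp hAc).continuousOn).integrableOn_compact stdSimplex2_compact
  have hsplit : ∀ (c₁ c₂ : ℝ) (f g : ℝ×ℝ → ℝ), Continuous f → Continuous g →
      (∫ x in stdSimplex2, (c₁ * f (A x) + c₂ * g (A x)))
        = c₁ * (∫ x in stdSimplex2, f (A x)) + c₂ * ∫ x in stdSimplex2, g (A x) := by
    intro c₁ c₂ f g hfc hgc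
    rw [MeasureTheory.integral_add ((hWcont f hfc).const_mul c₁) ((hWcont g hgc).const_mul c₂),
      MeasureTheory.integral_const_mul, MeasureTheory.integral_const_mul]
  -- solve for the simplex integrals of the second derivatives
  rw [hpdG11, hsplit dd.1 dd.2 _ _ hC11 hC21] at hS11
  rw [hpdG21, hsplit ee.1 ee.2 _ _ hC11 hC21] at hS21
  rw [hpdG12, hsplit dd.1 dd.2 _ _ hC12 hC22] at hS12
  rw [hpdG22, hsplit ee.1 ee.2 _ _ hC12 hC22] at hS22
  have hdet : dd.1*ee.2 - dd.2*ee.1 ≠ 0 := indep_det hind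
  have hI11 : (∫ x in stdSimplex2, pd1 (pd1 w) (A x)) = 0 := by
    have key : (dd.1*ee.2 - dd.2*ee.1) * (∫ x in stdSimplex2, pd1 (pd1 w) (A x))
        = ee.2*(dd.1 * (∫ x in stdSimplex2, pd1 (pd1 w) (A x))
            + dd.2 * (∫ x in stdSimplex2, pd2 (pd1 w) (A x)))
          - dd.2*(ee.1 * (∫ x in stdSimplex2, pd1 (pd1 w) (A x))
            + ee.2 * (∫ x in stdSimplex2, pd2 (pd1 w) (A x))) := by ring
    rw [hS11, hS21] at key
    simp only [mul_zero, sub_zero] at key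
    exact (mul_eq_zero.1 key).resolve_left hdet
  have hI12 : (∫ x in stdSimplex2, pd1 (pd2 w) (A x)) = 0 := by
    have key : (dd.1*ee.2 - dd.2*ee.1) * (∫ x in stdSimplex2, pd1 (pd2 w) (A x))
        = ee.2*(dd.1 * (∫ x in stdSimplex2, pd1 (pd2 w) (A x))
            + dd.2 * (∫ x in stdSimplex2, pd2 (pd2 w) (A x)))
          - dd.2*(ee.1 * (∫ x in stdSimplex2, pd1 (pd2 w) (A x))
            + ee.2 * (∫ x in stdSimplex2, pd2 (pd2 w) (A x))) := by ring
    rw [hS12, hS22] at key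
    simp only [mul_zero, sub_zero] at key
    exact (mul_eq_zero.1 key).resolve_left hdet
  have hI22 : (∫ x in stdSimplex2, pd2 (pd2 w) (A x)) = 0 := by
    have key : (dd.1*ee.2 - dd.2*ee.1) * (∫ x in stdSimplex2, pd2 (pd2 w) (A x))
        = dd.1*(ee.1 * (∫ x in stdSimplex2, pd1 (pd2 w) (A x))
            + ee.2 * (∫ x in stdSimplex2, pd2 (pd2 w) (A x)))
          - ee.1*(dd.1 * (∫ x in stdSimplex2, pd1 (pd2 w) (A x))
            + dd.2 * (∫ x in stdSimplex2, pd2 (pd2 w) (A x))) := by ring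
    rw [hS12, hS22] at key
    simp only [mul_zero, sub_zero] at key
    exact (mul_eq_zero.1 key).resolve_left hdet
  -- triangle integrals of second derivatives vanish
  have hT11 : (∫ x in convexHull ℝ {p₁, p₂, p₃}, pd1 (pd1 w) x) = 0 := cov _ hI11
  have hT12 : (∫ x in convexHull ℝ {p₁, p₂, p₃}, pd1 (pd2 w) x) = 0 := cov _ hI12
  have hT22 : (∫ x in convexHull ℝ {p₁, p₂, p₃}, pd2 (pd2 w) x) = 0 := cov _ hI22
  -- first-derivative decomposition of u
  have hud1 : pd1 u = fun q => pd1 P q + pd1 w q := by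
    funext q
    have husum : u = fun z => P z + w z := by
      funext z; rw [hw_def]; ring
    show fderiv ℝ u q (1,0) = _
    conv_lhs => rw [husum]
    rw [fderiv_fun_add ((hPc.differentiable (by norm_num)) q) ((hw.differentiable (by norm_num)) q)]
    rfl
  have hud2 : pd2 u = fun q => pd2 P q + pd2 w q := by
    funext q
    have husum : u = fun z => P z + w z := by
      funext z; rw [hw_def]; ring
    show fderiv ℝ u q (0,1) = _
    conv_lhs => rw [husum]
    rw [fderiv_fun_add ((hPc.differentiable (by norm_num)) q) ((hw.differentiable (by norm_num)) q)]
    rfl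
  have hdiffPd1 : ∀ q, DifferentiableAt ℝ (pd1 P) q := by
    intro q; rw [hPd1]; exact (affine_hasFDerivAt (2*a₁) a₂ a₄ q).differentiableAt
  have hdiffPd2 : ∀ q, DifferentiableAt ℝ (pd2 P) q := by
    intro q; rw [hPd2]; exact (affine_hasFDerivAt a₂ (2*a₃) a₅ q).differentiableAt
  have hu11 : pd1 (pd1 u) = fun q => 2*a₁ + pd1 (pd1 w) q := by
    rw [hud1]
    funext q
    show fderiv ℝ (fun q => pd1 P q + pd1 w q) q (1,0) = _
    rw [fderiv_fun_add (hdiffPd1 q) (hwc1.differentiable one_ne_zero q)]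
    have : fderiv ℝ (pd1 P) q (1,0) = pd1 (pd1 P) q := rfl
    simp only [ContinuousLinearMap.add_apply]
    rw [this, hP11]
    rfl
  have hu12 : pd1 (pd2 u) = fun q => a₂ + pd1 (pd2 w) q := by
    rw [hud2]
    funext q
    show fderiv ℝ (fun q => pd2 P q + pd2 w q) q (1,0) = _
    rw [fderiv_fun_add (hdiffPd2 q) (hwc2.differentiable one_ne_zero q)]
    have : fderiv ℝ (pd2 P) q (1,0) = pd1 (pd2 P) q := rfl
    simp only [ContinuousLinearMap.add_apply]
    rw [this, hP12]
    rfl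
  have hu22 : pd2 (pd2 u) = fun q => 2*a₃ + pd2 (pd2 w) q := by
    rw [hud2]
    funext q
    show fderiv ℝ (fun q => pd2 P q + pd2 w q) q (0,1) = _
    rw [fderiv_fun_add (hdiffPd2 q) (hwc2.differentiable one_ne_zero q)]
    have : fderiv ℝ (pd2 P) q (0,1) = pd2 (pd2 P) q := rfl
    simp only [ContinuousLinearMap.add_apply]
    rw [this, hP22]
    rfl
  -- the integrand identities
  have hfu : (fun q => (pd1 (pd1 u) q)^2 + 2*(pd1 (pd2 u) q)^2 + (pd2 (pd2 u) q)^2)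
      = fun q => (((2*a₁)^2 + 2*a₂^2 + (2*a₃)^2)
        + ((pd1 (pd1 w) q)^2 + 2*(pd1 (pd2 w) q)^2 + (pd2 (pd2 w) q)^2))
        + (4*a₁ * pd1 (pd1 w) q + 4*a₂ * pd1 (pd2 w) q + 4*a₃ * pd2 (pd2 w) q) := by
    funext q
    simp only [hu11, hu12, hu22]
    ring
  have hfP : (fun q => (pd1 (pd1 P) q)^2 + 2*(pd1 (pd2 P) q)^2 + (pd2 (pd2 P) q)^2)
      = fun _ : ℝ×ℝ => ((2*a₁)^2 + 2*a₂^2 + (2*a₃)^2) := by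
    funext q
    simp only [hP11, hP12, hP22]
  -- integrability on the triangle
  have hTcomp : IsCompact (convexHull ℝ ({p₁, p₂, p₃} : Set (ℝ×ℝ))) := by
    have : Set.Finite ({p₁, p₂, p₃} : Set (ℝ×ℝ)) := by
      apply Set.Finite.insert; apply Set.Finite.insert; exact Set.finite_singleton _
    exact this.isCompact_convexHull ℝ
  have hintconst : IntegrableOn (fun _ : ℝ×ℝ => ((2*a₁)^2 + 2*a₂^2 + (2*a₃)^2))
      (convexHull ℝ {p₁, p₂, p₃}) :=
    continuousOn_const.integrableOn_compact hTcomp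
  have hcw : Continuous (fun q => (pd1 (pd1 w) q)^2 + 2*(pd1 (pd2 w) q)^2 + (pd2 (pd2 w) q)^2) :=
    ((hC11.pow 2).add (continuous_const.mul (hC12.pow 2))).add (hC22.pow 2)
  have hintw : IntegrableOn (fun q => (pd1 (pd1 w) q)^2 + 2*(pd1 (pd2 w) q)^2 + (pd2 (pd2 w) q)^2)
      (convexHull ℝ {p₁, p₂, p₃}) :=
    hcw.continuousOn.integrableOn_compact hTcomp
  have hcz : Continuous (fun q => 4*a₁ * pd1 (pd1 w) q + 4*a₂ * pd1 (pd2 w) q + 4*a₃ * pd2 (pd2 w) q) :=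
    ((continuous_const.mul hC11).add (continuous_const.mul hC12)).add (continuous_const.mul hC22)
  have hintz : IntegrableOn (fun q => 4*a₁ * pd1 (pd1 w) q + 4*a₂ * pd1 (pd2 w) q + 4*a₃ * pd2 (pd2 w) q)
      (convexHull ℝ {p₁, p₂, p₃}) :=
    hcz.continuousOn.integrableOn_compact hTcomp
  have hintz0 : (∫ q in convexHull ℝ {p₁, p₂, p₃},
      (4*a₁ * pd1 (pd1 w) q + 4*a₂ * pd1 (pd2 w) q + 4*a₃ * pd2 (pd2 w) q)) = 0 := by
    have i1 : IntegrableOn (fun q => 4*a₁ * pd1 (pd1 w) q) (convexHull ℝ {p₁, p₂, p₃}) :=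
      ((hC11.continuousOn).integrableOn_compact hTcomp).const_mul _
    have i2 : IntegrableOn (fun q => 4*a₂ * pd1 (pd2 w) q) (convexHull ℝ {p₁, p₂, p₃}) :=
      ((hC12.continuousOn).integrableOn_compact hTcomp).const_mul _
    have i3 : IntegrableOn (fun q => 4*a₃ * pd2 (pd2 w) q) (convexHull ℝ {p₁, p₂, p₃}) :=
      ((hC22.continuousOn).integrableOn_compact hTcomp).const_mul _
    have i12 : IntegrableOn (fun q => 4*a₁ * pd1 (pd1 w) q + 4*a₂ * pd1 (pd2 w) q)
        (convexHull ℝ {p₁, p₂, p₃}) := i1.add i2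
    rw [MeasureTheory.integral_add i12 i3]
    rw [MeasureTheory.integral_add i1 i2,
      MeasureTheory.integral_const_mul, MeasureTheory.integral_const_mul,
      MeasureTheory.integral_const_mul, hT11, hT12, hT22]
    ring
  -- final computation
  simp only [H2semisq]
  rw [hfu, hfP]
  have hintPw : IntegrableOn (fun q => ((2*a₁)^2 + 2*a₂^2 + (2*a₃)^2)
      + ((pd1 (pd1 w) q)^2 + 2*(pd1 (pd2 w) q)^2 + (pd2 (pd2 w) q)^2))
      (convexHull ℝ {p₁, p₂, p₃}) := hintconst.add hintw
  rw [MeasureTheory.integral_add hintPw hintz]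
  rw [MeasureTheory.integral_add hintconst hintw, hintz0]
  ring
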